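/- arXiv:2403.06323 — 2 statements merged into one kernel-verified Lean document; each statement's English description precedes it below -/
import Mathlib

section
/- The OCE is concave in the random variable: if u : ℝ → ℝ is concave, then for random variables X, Y on a common probability space and λ ∈ [0,1], OCE_u(λX + (1-λ)Y) ≥ λ·OCE_u(X) + (1-λ)·OCE_u(Y), where OCE_u(Z) := sup_{b ∈ ℝ} (b + E[u(Z - b)]). -/
open MeasureTheory Set

/-- The optimized certainty equivalent of a random variable `X` under utility `u`. -/
noncomputable def OCE {Ω : Type*} [MeasurableSpace Ω] (μ : Measure Ω)
    (u : ℝ → ℝ) (X : Ω → ℝ) : ℝ :=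
  sSup {y : ℝ | ∃ b : ℝ, y = b + ∫ ω, u (X ω - b) ∂μ}

/-! Concavity of `u` gives, pointwise,
`λ u (X - b₁) + (1 - λ) u (Y - b₂) ≤ u (λ X + (1 - λ) Y - (λ b₁ + (1 - λ) b₂))`,
so every such combination of candidate values for `X` and `Y` is dominated by a candidate value
for `λ X + (1 - λ) Y`, and taking suprema gives the inequality. Because `sSup` of a set of reals
that is unbounded above is `0`, one also needs the candidate sets to be bounded simultaneously:
for `|Z| ≤ M`, the value `b + E[u (Z - b)]` lies within `M` of the values of the concave function
`φ x = x + u (-x)` on `[b - M, b + M]`, so the candidate set of `Z` is bounded above iff `φ` is. -/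

theorem exists_notMem_le_of_not_bddAbove {α : Type*} [TopologicalSpace α] {f : α → ℝ}
    (hf : Continuous f) (hb : ¬BddAbove (range f)) {K : Set α} (hK : IsCompact K) (N : ℝ) :
    ∃ x ∉ K, N ≤ f x := by
  by_contra! h
  obtain ⟨C, hC⟩ := hK.bddAbove_image hf.continuousOn
  refine hb ⟨max C N, ?_⟩
  rintro _ ⟨x, rfl⟩
  by_cases hx : x ∈ K
  · exact le_max_of_le_left (hC (mem_image_of_mem f hx))
  · exact le_max_of_le_right (h x hx).le

theorem ConcaveOn.exists_forall_Icc_le_of_not_bddAbove {φ : ℝ → ℝ} (hφ : ConcaveOn ℝ univ φ)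
    (hb : ¬BddAbove (range φ)) (N d : ℝ) : ∃ b, ∀ x ∈ Icc (b - d) (b + d), N ≤ φ x := by
  obtain ⟨_, ⟨x₀, rfl⟩, hx₀⟩ := not_bddAbove_iff.mp hb N
  obtain ⟨x₁, hx₁, hx₁N⟩ := exists_notMem_le_of_not_bddAbove hφ.locallyLipschitz.continuous hb
    (isCompact_Icc (a := x₀ - 2 * d) (b := x₀ + 2 * d)) N
  refine ⟨(x₀ + x₁) / 2, fun x ⟨hxl, hxr⟩ => ?_⟩
  -- `x₁` lies more than `2 d` away from `x₀`, so the midpoint interval sits between them.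
  have hx : x ∈ segment ℝ x₀ x₁ := by
    rw [segment_eq_uIcc, mem_uIcc]
    rw [mem_Icc, not_and_or, not_le, not_le] at hx₁
    rcases hx₁ with h | h
    · exact Or.inr ⟨by linarith, by linarith⟩
    · exact Or.inl ⟨by linarith, by linarith⟩
  exact (le_min hx₀.le hx₁N).trans (hφ.ge_on_segment trivial trivial hx)

theorem ConcaveOn.id_add_comp_neg {u : ℝ → ℝ} (hu : ConcaveOn ℝ univ u) :
    ConcaveOn ℝ univ fun x => x + u (-x) :=
  (concaveOn_id convex_univ).add
    (by simpa [Function.comp_def] using hu.comp_linearMap (-LinearMap.id))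

theorem abs_convexCombo_le {x y lam M : ℝ} (hlam : lam ∈ Icc (0 : ℝ) 1) (hx : |x| ≤ M)
    (hy : |y| ≤ M) : |lam * x + (1 - lam) * y| ≤ M :=
  abs_le.mpr <| convex_Icc (-M) M (abs_le.mp hx) (abs_le.mp hy) hlam.1 (sub_nonneg.2 hlam.2)
    (add_sub_cancel _ _)

theorem Real.iSup_add_iSup_le {ι κ : Sort*} [Nonempty ι] [Nonempty κ] {f : ι → ℝ} {g : κ → ℝ}
    {a : ℝ} (h : ∀ i j, f i + g j ≤ a) : (⨆ i, f i) + ⨆ j, g j ≤ a := by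
  have hf : ∀ j, ⨆ i, f i ≤ a - g j := fun j => ciSup_le fun i => by linarith [h i j]
  have hg : ⨆ j, g j ≤ a - ⨆ i, f i := ciSup_le fun j => by linarith [hf j]
  linarith

theorem Continuous.integrable_comp_of_abs_le {Ω : Type*} [MeasurableSpace Ω] {μ : Measure Ω}
    [IsFiniteMeasure μ] {u : ℝ → ℝ} {Z : Ω → ℝ} {M : ℝ} (hu : Continuous u) (hZ : Measurable Z)
    (hM : ∀ ω, |Z ω| ≤ M) : Integrable (fun ω => u (Z ω)) μ := by
  obtain ⟨C, hC⟩ := isCompact_Icc.exists_bound_of_continuousOn hu.continuousOn (s := Icc (-M) M)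
  exact .of_bound (hu.measurable.comp hZ).aestronglyMeasurable C
    (ae_of_all _ fun ω => hC _ (abs_le.mp (hM ω)))

namespace OCE

variable {Ω : Type*} [MeasurableSpace Ω] {μ : Measure Ω} {u : ℝ → ℝ} {Z : Ω → ℝ} {M : ℝ}

noncomputable def objective (μ : Measure Ω) (u : ℝ → ℝ) (Z : Ω → ℝ) (b : ℝ) : ℝ :=
  b + ∫ ω, u (Z ω - b) ∂μ

theorem _root_.OCE_eq_iSup_objective (μ : Measure Ω) (u : ℝ → ℝ) (Z : Ω → ℝ) :
    OCE μ u Z = ⨆ b, objective μ u Z b :=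
  congrArg sSup <| ext fun _ => exists_congr fun _ => eq_comm

theorem integrable_comp_sub [IsFiniteMeasure μ] (hu : ConcaveOn ℝ univ u) (hZ : Measurable Z)
    (hM : ∀ ω, |Z ω| ≤ M) (b : ℝ) : Integrable (fun ω => u (Z ω - b)) μ :=
  hu.locallyLipschitz.continuous.integrable_comp_of_abs_le (hZ.sub_const b)
    fun ω => (abs_sub _ _).trans (add_le_add_left (hM ω) _)

theorem objective_convexCombo_le [IsFiniteMeasure μ] {X Y : Ω → ℝ} {lam : ℝ}
    (hlam : lam ∈ Icc (0 : ℝ) 1) (hu : ConcaveOn ℝ univ u) (hX : Measurable X)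
    (hY : Measurable Y) (hXM : ∀ ω, |X ω| ≤ M) (hYM : ∀ ω, |Y ω| ≤ M) (b₁ b₂ : ℝ) :
    lam * objective μ u X b₁ + (1 - lam) * objective μ u Y b₂ ≤
      objective μ u (fun ω => lam * X ω + (1 - lam) * Y ω) (lam * b₁ + (1 - lam) * b₂) := by
  have hiX := (integrable_comp_sub (μ := μ) hu hX hXM b₁).const_mul lam
  have hiY := (integrable_comp_sub (μ := μ) hu hY hYM b₂).const_mul (1 - lam)
  have hiC := integrable_comp_sub (μ := μ) hu (by fun_prop)
    (fun ω => abs_convexCombo_le hlam (hXM ω) (hYM ω)) (lam * b₁ + (1 - lam) * b₂)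
  have hpt : ∀ ω, lam * u (X ω - b₁) + (1 - lam) * u (Y ω - b₂) ≤
      u (lam * X ω + (1 - lam) * Y ω - (lam * b₁ + (1 - lam) * b₂)) := fun ω => by
    have h := hu.2 (mem_univ (X ω - b₁)) (mem_univ (Y ω - b₂)) hlam.1 (sub_nonneg.2 hlam.2)
      (add_sub_cancel _ _)
    simp only [smul_eq_mul] at h
    exact h.trans_eq (congrArg u (by ring))
  have hint := integral_mono (hiX.add hiY) hiC hpt
  rw [integral_add' hiX hiY, integral_const_mul, integral_const_mul] at hint
  simp only [objective]
  linarith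

variable [IsProbabilityMeasure μ]

-- With `x = b - Z ω`, the integrand is `u (-x) = (x + u (-x)) - b + Z ω`.
theorem objective_le {K : ℝ} (hu : ConcaveOn ℝ univ u) (hZ : Measurable Z)
    (hM : ∀ ω, |Z ω| ≤ M) (hK : ∀ x, x + u (-x) ≤ K) (b : ℝ) : objective μ u Z b ≤ K + M := by
  have hpt : ∀ ω, u (Z ω - b) ≤ K + M - b := fun ω => by
    have := hK (b - Z ω)
    rw [neg_sub] at this
    linarith [(abs_le.mp (hM ω)).2]
  have := integral_mono (integrable_comp_sub (μ := μ) hu hZ hM b) (integrable_const _) hpt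
  simp only [integral_const, probReal_univ, one_smul] at this
  simp only [objective]
  linarith

theorem le_objective {N b : ℝ} (hu : ConcaveOn ℝ univ u) (hZ : Measurable Z)
    (hM : ∀ ω, |Z ω| ≤ M) (hN : ∀ x ∈ Icc (b - M) (b + M), N ≤ x + u (-x)) :
    N - M ≤ objective μ u Z b := by
  have hpt : ∀ ω, N - M - b ≤ u (Z ω - b) := fun ω => by
    obtain ⟨hZl, hZr⟩ := abs_le.mp (hM ω)
    have := hN (b - Z ω) ⟨by linarith, by linarith⟩
    rw [neg_sub] at this
    linarith
  have := integral_mono (integrable_const _) (integrable_comp_sub (μ := μ) hu hZ hM b) hpt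
  simp only [integral_const, probReal_univ, one_smul] at this
  simp only [objective]
  linarith

theorem bddAbove_range_objective_iff (hu : ConcaveOn ℝ univ u) (hZ : Measurable Z)
    (hM : ∀ ω, |Z ω| ≤ M) :
    BddAbove (range (objective μ u Z)) ↔ BddAbove (range fun x => x + u (-x)) := by
  constructor
  · rintro ⟨K, hK⟩
    by_contra hφ
    obtain ⟨b, hb⟩ := hu.id_add_comp_neg.exists_forall_Icc_le_of_not_bddAbove hφ (K + M + 1) M
    linarith [le_objective (μ := μ) hu hZ hM hb, hK ⟨b, rfl⟩]
  · rintro ⟨K, hK⟩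
    exact ⟨K + M, by rintro _ ⟨b, rfl⟩; exact objective_le hu hZ hM (fun x => hK ⟨x, rfl⟩) b⟩

end OCE

theorem oce_concave_general {Ω : Type*} [MeasurableSpace Ω] (μ : Measure Ω)
    [IsProbabilityMeasure μ] (u : ℝ → ℝ) (X Y : Ω → ℝ) (lam : ℝ)
    (hlam : lam ∈ Set.Icc (0 : ℝ) 1)
    (hu_concave : ConcaveOn ℝ Set.univ u)
    (hX : Measurable X) (hY : Measurable Y)
    (hbound : ∃ M : ℝ, ∀ ω, |X ω| ≤ M ∧ |Y ω| ≤ M) :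
    lam * OCE μ u X + (1 - lam) * OCE μ u Y ≤
      OCE μ u (fun ω => lam * X ω + (1 - lam) * Y ω) := by
  obtain ⟨M, hM⟩ := hbound
  have hXM : ∀ ω, |X ω| ≤ M := fun ω => (hM ω).1
  have hYM : ∀ ω, |Y ω| ≤ M := fun ω => (hM ω).2
  have hCM : ∀ ω, |lam * X ω + (1 - lam) * Y ω| ≤ M :=
    fun ω => abs_convexCombo_le hlam (hXM ω) (hYM ω)
  have hC : Measurable fun ω => lam * X ω + (1 - lam) * Y ω := by fun_prop
  simp only [OCE_eq_iSup_objective]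
  by_cases hb : BddAbove (range (OCE.objective μ u fun ω => lam * X ω + (1 - lam) * Y ω))
  · rw [Real.mul_iSup_of_nonneg hlam.1, Real.mul_iSup_of_nonneg (sub_nonneg.2 hlam.2)]
    exact Real.iSup_add_iSup_le fun b₁ b₂ =>
      (OCE.objective_convexCombo_le hlam hu_concave hX hY hXM hYM b₁ b₂).trans (le_ciSup hb _)
  · -- Boundedness does not depend on the variable, so all three suprema take the junk value `0`.
    have hφ := (OCE.bddAbove_range_objective_iff hu_concave hC hCM).not.mp hb
    rw [Real.iSup_of_not_bddAbove hb,
      Real.iSup_of_not_bddAbove ((OCE.bddAbove_range_objective_iff hu_concave hX hXM).not.mpr hφ),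
      Real.iSup_of_not_bddAbove ((OCE.bddAbove_range_objective_iff hu_concave hY hYM).not.mpr hφ)]
    simp

/-- Concavity of the OCE in the random variable. -/
theorem oce_concave {Ω : Type*} [MeasurableSpace Ω] (μ : Measure Ω)
    [IsProbabilityMeasure μ] (u : ℝ → ℝ) (X Y : Ω → ℝ) (lam : ℝ)
    (hlam : lam ∈ Set.Icc (0 : ℝ) 1)
    (hu_concave : ConcaveOn ℝ Set.univ u)
    (hu_cont : Continuous u)
    (hX : Measurable X) (hY : Measurable Y)
    (hbound : ∃ M : ℝ, ∀ ω, |X ω| ≤ M ∧ |Y ω| ≤ M) :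
    lam * OCE μ u X + (1 - lam) * OCE μ u Y ≤
      OCE μ u (fun ω => lam * X ω + (1 - lam) * Y ω) :=
  oce_concave_general μ u X Y lam hlam hu_concave hX hY hbound
end

section
/- Let 0 ≤ κ₁ < 1 < κ₂ and define the piecewise linear utility u(t) = κ₁·max(t,0) - κ₂·max(-t,0). Then for any bounded random variable X taking values in [0,1], sup_{b ∈ [0,1]} (b + E[u(X - b)]) = κ₁·E[X] + (1-κ₁)·CVaR_τ(X), where τ = (1-κ₁)/(κ₂-κ₁) and CVaR_τ(X) := sup_{b ∈ [0,1]} (b - τ⁻¹·E[max(b - X, 0)]). -/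
open MeasureTheory Set

/-- With the piecewise-linear utility `u t = κ₁ (t)₊ - κ₂ (-t)₊` for `0 ≤ κ₁ < 1 < κ₂`,
the OCE is the mean-CVaR mixture `κ₁ E[X] + (1-κ₁) CVaR_τ(X)` with
`τ = (1-κ₁)/(κ₂-κ₁)`. -/
theorem oce_piecewise_linear_eq_mean_cvar {Ω : Type*} [MeasurableSpace Ω] (μ : Measure Ω)
    [IsProbabilityMeasure μ] (X : Ω → ℝ) (κ₁ κ₂ τ : ℝ)
    (hκ₁ : 0 ≤ κ₁) (hκ₁2 : κ₁ < 1) (hκ₂ : 1 < κ₂)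
    (hτ : τ = (1 - κ₁) / (κ₂ - κ₁))
    (hX : Measurable X) (hXrange : ∀ ω, X ω ∈ Set.Icc (0 : ℝ) 1) :
    sSup {y : ℝ | ∃ b ∈ Set.Icc (0 : ℝ) 1,
        y = b + ∫ ω, (κ₁ * max (X ω - b) 0 - κ₂ * max (-(X ω - b)) 0) ∂μ}
      = κ₁ * (∫ ω, X ω ∂μ)
        + (1 - κ₁) * sSup {y : ℝ | ∃ b ∈ Set.Icc (0 : ℝ) 1,
            y = b - τ⁻¹ * ∫ ω, max (b - X ω) 0 ∂μ} := by
  set m := ∫ ω, X ω ∂μ with hm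
  have ha : (0:ℝ) < 1 - κ₁ := by linarith
  have hba : (0:ℝ) < κ₂ - κ₁ := by linarith
  have haτ : (1 - κ₁) * τ⁻¹ = κ₂ - κ₁ := by
    rw [hτ]; field_simp
  have hXint : Integrable X μ := by
    apply Integrable.mono' (integrable_const (1:ℝ)) hX.aestronglyMeasurable
    filter_upwards with ω
    have h := hXrange ω
    rw [Real.norm_eq_abs, abs_of_nonneg h.1]; exact h.2
  have hint : ∀ b : ℝ, Integrable (fun ω => max (b - X ω) 0) μ :=
    fun b => ((integrable_const b).sub hXint).pos_part
  have key : ∀ b : ℝ, (∫ ω, (κ₁ * max (X ω - b) 0 - κ₂ * max (-(X ω - b)) 0) ∂μ)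
      = κ₁ * (m - b) - (κ₂ - κ₁) * ∫ ω, max (b - X ω) 0 ∂μ := by
    intro b
    have heq : ∀ ω, κ₁ * max (X ω - b) 0 - κ₂ * max (-(X ω - b)) 0
        = κ₁ * (X ω - b) - (κ₂ - κ₁) * max (b - X ω) 0 := by
      intro ω
      rcases le_total b (X ω) with h | h
      · rw [max_eq_left (by linarith), max_eq_right (by linarith),
          max_eq_right (by linarith)]; ring
      · rw [max_eq_right (by linarith), max_eq_left (by linarith),
          max_eq_left (by linarith)]; ring
    simp_rw [heq]
    have h1 : Integrable (fun ω => κ₁ * (X ω - b)) μ :=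
      (hXint.sub (integrable_const b)).const_mul κ₁
    have h2 : Integrable (fun ω => (κ₂ - κ₁) * max (b - X ω) 0) μ :=
      (hint b).const_mul (κ₂ - κ₁)
    rw [integral_sub h1 h2, integral_const_mul, integral_const_mul,
      integral_sub hXint (integrable_const b), integral_const]
    simp [← hm]
  set S := {y : ℝ | ∃ b ∈ Set.Icc (0 : ℝ) 1,
      y = b - τ⁻¹ * ∫ ω, max (b - X ω) 0 ∂μ} with hSdef
  have hS_ne : S.Nonempty :=
    ⟨0 - τ⁻¹ * ∫ ω, max ((0:ℝ) - X ω) 0 ∂μ, 0, ⟨le_refl 0, zero_le_one⟩, rfl⟩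
  have hτinv : (0:ℝ) ≤ τ⁻¹ := by
    rw [hτ]; positivity
  have hS_bdd : BddAbove S := by
    refine ⟨1, ?_⟩
    rintro y ⟨b, hb, rfl⟩
    have hI : (0:ℝ) ≤ ∫ ω, max (b - X ω) 0 ∂μ :=
      integral_nonneg fun ω => le_max_right _ _
    nlinarith [hb.2]
  have hτi : τ⁻¹ = (κ₂ - κ₁) / (1 - κ₁) := by rw [hτ, inv_div]
  have hiden : ∀ b I : ℝ, b + (κ₁ * (m - b) - (κ₂ - κ₁) * I)
      = κ₁ * m + (1 - κ₁) * (b - τ⁻¹ * I) := by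
    intro b I
    rw [hτi]
    field_simp
    ring
  have himg : {y : ℝ | ∃ b ∈ Set.Icc (0 : ℝ) 1,
      y = b + ∫ ω, (κ₁ * max (X ω - b) 0 - κ₂ * max (-(X ω - b)) 0) ∂μ}
      = (fun y => κ₁ * m + (1 - κ₁) * y) '' S := by
    ext y
    constructor
    · rintro ⟨b, hb, rfl⟩
      refine ⟨b - τ⁻¹ * ∫ ω, max (b - X ω) 0 ∂μ, ⟨b, hb, rfl⟩, ?_⟩
      rw [key b]
      exact (hiden b _).symm
    · rintro ⟨y, ⟨b, hb, rfl⟩, rfl⟩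
      refine ⟨b, hb, ?_⟩
      rw [key b]
      exact (hiden b _).symm
  have hmono : Monotone (fun y : ℝ => κ₁ * m + (1 - κ₁) * y) := fun x y h => by
    simp only
    nlinarith
  have hcont : ContinuousAt (fun y : ℝ => κ₁ * m + (1 - κ₁) * y) (sSup S) :=
    (continuous_const.add (continuous_const.mul continuous_id)).continuousAt
  rw [himg, ← hmono.map_csSup_of_continuousAt hcont hS_ne hS_bdd]
end
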